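/- If φ is a skeleton (in the abstract sense) on a justified AJM game A, then φ• = { t | ∃ s ∈ φ, s ≈_A t } is a strategy on A, and φ is a skeleton of the strategy φ•. -/

import Mathlib

/- Justified AJM games, after Abramsky's game semantics for access control. -/

namespace AJM

inductive Pol where
  | P
  | O
deriving DecidableEq

inductive QA where
  | Q
  | Ans
deriving DecidableEq

def Pol.flip : Pol → Pol
  | .P => .O
  | .O => .P

/-- Well-bracketed strings over moves (condition (p4)). -/
inductive WB {M : Type} (lab : M → Pol × QA) (just : M → Option M) : List M → Prop
  | nil : WB lab just []
  | wrap (a q : M) (u : List M) : (lab a).2 = QA.Ans → just a = some q →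
      WB lab just u → WB lab just (q :: (u ++ [a]))
  | append (u v : List M) : WB lab just u → WB lab just v → WB lab just (u ++ v)

/-- Conditions (p1)–(p5): Opponent starts, alternation, linearity,
well-bracketing, justifiers occur before their moves. -/
def ValidSeq {M : Type} (lab : M → Pol × QA) (just : M → Option M) (s : List M) : Prop :=
  (∀ m, s.head? = some m → (lab m).1 = Pol.O) ∧
  List.Chain' (fun m m' => (lab m).1 ≠ (lab m').1) s ∧
  s.Nodup ∧
  (∃ t, s <+: t ∧ WB lab just t) ∧
  (∀ s₁ m s₂, s = s₁ ++ m :: s₂ → ∀ m', just m = some m' → m' ∈ s₁)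

/-- A justified AJM game (the data). -/
structure Game where
  M : Type
  lab : M → Pol × QA
  just : M → Option M
  pos : Set (List M)
  equiv : List M → List M → Prop

namespace Game

/-- The axioms making the data of a `Game` an actual justified AJM game. -/
structure Valid (A : Game) : Prop where
  just_wf : WellFounded fun m m' : A.M => A.just m' = some m
  just_pol : ∀ m m', A.just m = some m' → (A.lab m).1 ≠ (A.lab m').1
  just_qa : ∀ m m', A.just m = some m' → (A.lab m).2 = QA.Ans → (A.lab m').2 = QA.Q
  ans_justified : ∀ m, (A.lab m).2 = QA.Ans → A.just m ≠ none
  pos_nonempty : A.pos.Nonempty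
  pos_prefix_closed : ∀ s t : List A.M, s <+: t → t ∈ A.pos → s ∈ A.pos
  pos_valid : ∀ s ∈ A.pos, ValidSeq A.lab A.just s
  equiv_mem : ∀ s t, A.equiv s t → s ∈ A.pos ∧ t ∈ A.pos
  equiv_refl : ∀ s ∈ A.pos, A.equiv s s
  equiv_symm : ∀ s t, A.equiv s t → A.equiv t s
  equiv_trans : ∀ s t u, A.equiv s t → A.equiv t u → A.equiv s u
  equiv_lab : ∀ s t, A.equiv s t → s.map A.lab = t.map A.lab
  equiv_prefix : ∀ s t s' t', A.equiv s t → s' <+: s → t' <+: t →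
      s'.length = t'.length → A.equiv s' t'
  equiv_ext : ∀ s t a, A.equiv s t → s ++ [a] ∈ A.pos → ∃ b, A.equiv (s ++ [a]) (t ++ [b])

/-- A strategy on a game: a non-empty set of even-length positions that is
causally consistent, representation independent and deterministic. -/
structure IsStrategy (A : Game) (σ : Set (List A.M)) : Prop where
  subset_pos : σ ⊆ A.pos
  even_length : ∀ s ∈ σ, Even s.length
  nonempty : σ.Nonempty
  causal : ∀ s a b, s ++ [a, b] ∈ σ → s ∈ σ
  repind : ∀ s t, s ∈ σ → A.equiv s t → t ∈ σ
  det : ∀ s t a b a' b', s ++ [a, b] ∈ σ → t ++ [a', b'] ∈ σ →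
      A.equiv (s ++ [a]) (t ++ [a']) → A.equiv (s ++ [a, b]) (t ++ [a', b'])

/-- A skeleton of a strategy `σ`: a non-empty, causally consistent subset of
`σ` satisfying Uniformization. -/
structure IsSkeletonOf (A : Game) (φ σ : Set (List A.M)) : Prop where
  nonempty : φ.Nonempty
  subset : φ ⊆ σ
  causal : ∀ s a b, s ++ [a, b] ∈ φ → s ∈ φ
  uniformization : ∀ s a b, s ++ [a, b] ∈ σ → s ∈ φ → ∃! b', s ++ [a, b'] ∈ φ

/-- A skeleton in the abstract sense (independently of any strategy):
a non-empty, causally consistent set of even-length positions satisfying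
Functional Determinacy and Functional Representation Independence. -/
structure IsSkeleton (A : Game) (φ : Set (List A.M)) : Prop where
  subset_pos : φ ⊆ A.pos
  even_length : ∀ s ∈ φ, Even s.length
  nonempty : φ.Nonempty
  causal : ∀ s a b, s ++ [a, b] ∈ φ → s ∈ φ
  funDet : ∀ s a b c, s ++ [a, b] ∈ φ → s ++ [a, c] ∈ φ → b = c
  funRepInd : ∀ s t a b a', s ++ [a, b] ∈ φ → t ∈ φ →
      A.equiv (s ++ [a]) (t ++ [a']) →
      ∃! b', t ++ [a', b'] ∈ φ ∧ A.equiv (s ++ [a, b]) (t ++ [a', b'])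

/-- `φ• = { t | ∃ s ∈ φ, s ≈_A t }`, the saturation of `φ` under `≈_A`. -/
def dot (A : Game) (φ : Set (List A.M)) : Set (List A.M) :=
  {t | ∃ s ∈ φ, A.equiv s t}

/-- The preorder `φ ⊑ ψ` on skeletons. -/
def Subeq (A : Game) (φ ψ : Set (List A.M)) : Prop :=
  ∀ s a b s' a', s ++ [a, b] ∈ φ → s' ∈ ψ → A.equiv (s ++ [a]) (s' ++ [a']) →
    ∃ b', s' ++ [a', b'] ∈ ψ ∧ A.equiv (s ++ [a, b]) (s' ++ [a', b'])

end Game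

end AJM

/-! Every element of `φ•` is equivalent to a play of `φ`, and the game axioms (e1)–(e2) let us
cut that equivalence down to prefixes. Determinacy of `φ•` then reduces to determinacy of `φ`
itself, which is Functional Representation Independence followed by Functional Determinacy;
Uniformization is Functional Representation Independence read from the `φ`-representative. -/

namespace AJM.Game

variable {A : Game}

theorem Valid.length_eq_of_equiv (hA : A.Valid) {s t : List A.M} (h : A.equiv s t) :
    s.length = t.length := by
  simpa using congrArg List.length (hA.equiv_lab s t h)

theorem Valid.exists_of_equiv_append_pair (hA : A.Valid) {u t : List A.M} {a b : A.M}
    (h : A.equiv u (t ++ [a, b])) :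
    ∃ u₀ c d, u = u₀ ++ [c, d] ∧ A.equiv u₀ t ∧ A.equiv (u₀ ++ [c]) (t ++ [a]) := by
  have hlen : u.length = t.length + 2 := by simpa using hA.length_eq_of_equiv h
  obtain ⟨c, d, hcd⟩ := List.length_eq_two.mp (by simp [hlen] : (u.drop t.length).length = 2)
  set u₀ := u.take t.length
  have hu : u = u₀ ++ [c, d] := by rw [← hcd, List.take_append_drop]
  have hu₀ : u₀.length = t.length := by simp [u₀, hlen]
  refine ⟨u₀, c, d, hu, ?_, ?_⟩
  · exact hA.equiv_prefix _ _ _ _ h ⟨[c, d], hu.symm⟩ ⟨[a, b], rfl⟩ hu₀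
  · exact hA.equiv_prefix _ _ _ _ h ⟨[d], by simp [hu]⟩ ⟨[b], by simp⟩ (by simp [hu₀])

theorem Valid.exists_mem_of_mem_dot_append_pair (hA : A.Valid) {φ : Set (List A.M)}
    {t : List A.M} {a b : A.M} (h : t ++ [a, b] ∈ dot A φ) :
    ∃ u c d, u ++ [c, d] ∈ φ ∧ A.equiv (u ++ [c, d]) (t ++ [a, b]) ∧ A.equiv u t ∧
      A.equiv (u ++ [c]) (t ++ [a]) := by
  obtain ⟨v, hv, hvt⟩ := h
  obtain ⟨u, c, d, rfl, hut, huct⟩ := hA.exists_of_equiv_append_pair hvt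
  exact ⟨u, c, d, hv, hvt, hut, huct⟩

variable {φ : Set (List A.M)}

theorem IsSkeleton.subset_dot (hA : A.Valid) (hφ : IsSkeleton A φ) : φ ⊆ dot A φ :=
  fun s hs => ⟨s, hs, hA.equiv_refl s (hφ.subset_pos hs)⟩

theorem IsSkeleton.equiv_append_pair (hφ : IsSkeleton A φ) {s t : List A.M} {a b a' b' : A.M}
    (hs : s ++ [a, b] ∈ φ) (ht : t ++ [a', b'] ∈ φ) (h : A.equiv (s ++ [a]) (t ++ [a'])) :
    A.equiv (s ++ [a, b]) (t ++ [a', b']) := by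
  obtain ⟨b'', ⟨hb'', hequiv⟩, -⟩ := hφ.funRepInd s t a b a' hs (hφ.causal t a' b' ht) h
  rwa [hφ.funDet t a' b'' b' hb'' ht] at hequiv

theorem IsSkeleton.isStrategy_dot (hA : A.Valid) (hφ : IsSkeleton A φ) :
    IsStrategy A (dot A φ) where
  subset_pos := fun t ⟨s, _, hst⟩ => (hA.equiv_mem s t hst).2
  even_length := fun t ⟨s, hs, hst⟩ => hA.length_eq_of_equiv hst ▸ hφ.even_length s hs
  nonempty := hφ.nonempty.mono (hφ.subset_dot hA)
  causal t a b h := by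
    obtain ⟨u, c, d, hu, -, hut, -⟩ := hA.exists_mem_of_mem_dot_append_pair h
    exact ⟨u, hφ.causal u c d hu, hut⟩
  repind := fun s t ⟨u, hu, hus⟩ hst => ⟨u, hu, hA.equiv_trans u s t hus hst⟩
  det s t a b a' b' hs ht h := by
    obtain ⟨u, c, d, hu, hus, -, huc⟩ := hA.exists_mem_of_mem_dot_append_pair hs
    obtain ⟨v, c', d', hv, hvt, -, hvc⟩ := hA.exists_mem_of_mem_dot_append_pair ht
    have hcc' : A.equiv (u ++ [c]) (v ++ [c']) :=
      hA.equiv_trans _ _ _ huc (hA.equiv_trans _ _ _ h (hA.equiv_symm _ _ hvc))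
    exact hA.equiv_trans _ _ _ (hA.equiv_symm _ _ hus)
      (hA.equiv_trans _ _ _ (hφ.equiv_append_pair hu hv hcc') hvt)

theorem IsSkeleton.isSkeletonOf_dot (hA : A.Valid) (hφ : IsSkeleton A φ) :
    IsSkeletonOf A φ (dot A φ) where
  nonempty := hφ.nonempty
  subset := hφ.subset_dot hA
  causal := hφ.causal
  uniformization s a b h hs := by
    obtain ⟨u, c, d, hu, -, -, huc⟩ := hA.exists_mem_of_mem_dot_append_pair h
    obtain ⟨b', ⟨hb', -⟩, -⟩ := hφ.funRepInd u s c d a hu hs huc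
    exact ⟨b', hb', fun b'' hb'' => hφ.funDet s a b'' b' hb'' hb'⟩

end AJM.Game

open AJM Game in
/-- If `φ` is a skeleton (in the abstract sense), then `φ•` is a strategy,
and `φ` is a skeleton of `φ•`. -/
theorem dot_of_skeleton_is_strategy (A : Game) (hA : A.Valid)
    (φ : Set (List A.M)) (hφ : IsSkeleton A φ) :
    IsStrategy A (dot A φ) ∧ IsSkeletonOf A φ (dot A φ) :=
  ⟨hφ.isStrategy_dot hA, hφ.isSkeletonOf_dot hA⟩
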